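/- arXiv:1611.09211 — 4 statements merged into one kernel-verified Lean document; each statement's English description precedes it below -/
import Mathlib

section
/- The set of permutations of {1,...,n} obtained by completing increasing sequences of length k (with 0 < k < n) to permutations generates the full symmetric group S_n. Here an increasing sequence i_1 < ... < i_k with values in {1,...,n} is completed to the permutation sending l to i_l for l ≤ k, and sending k+j to the j-th smallest element of {1,...,n} not among i_1,...,i_k. -/
namespace IncSeqGen

variable {n : ℕ}

/-- The cycle `(a a+1 ... b)` on `Fin n`, sending `x ↦ x+1` for `a ≤ x < b`, `b ↦ a`,
and fixing everything else. -/
def rot (a b : ℕ) (hab : a ≤ b) (hb : b < n) : Equiv.Perm (Fin n) where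
  toFun x := if x.val = b then ⟨a, hab.trans_lt hb⟩
    else if h : a ≤ x.val ∧ x.val < b then ⟨x.val + 1, by omega⟩ else x
  invFun x := if x.val = a then ⟨b, hb⟩
    else if h : a < x.val ∧ x.val ≤ b then ⟨x.val - 1, by omega⟩ else x
  left_inv x := by
    dsimp only
    split_ifs <;> simp_all [Fin.ext_iff] <;> omega
  right_inv x := by
    dsimp only
    split_ifs <;> simp_all [Fin.ext_iff] <;> omega

lemma rot_val (a b : ℕ) (hab : a ≤ b) (hb : b < n) (x : Fin n) :
    (rot a b hab hb x).val =
      if x.val = b then a else if a ≤ x.val ∧ x.val < b then x.val + 1 else x.val := by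
  simp only [rot, Equiv.coe_fn_mk]
  split_ifs <;> simp_all

lemma rot_inv_val (a b : ℕ) (hab : a ≤ b) (hb : b < n) (x : Fin n) :
    ((rot a b hab hb)⁻¹ x).val =
      if x.val = a then b else if a < x.val ∧ x.val ≤ b then x.val - 1 else x.val := by
  show ((rot a b hab hb).symm x).val = _
  simp only [rot, Equiv.coe_fn_symm_mk]
  split_ifs <;> simp_all

section

variable (k : ℕ) (hkn : k < n)

/-- Membership criterion for the generating set. -/
lemma mem_of_mono (σ : Equiv.Perm (Fin n))
    (h1 : ∀ a b : Fin n, a.val < k → b.val < k → a < b → σ a < σ b)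
    (h2 : ∀ a b : Fin n, k ≤ a.val → k ≤ b.val → a < b → σ a < σ b) :
    σ ∈ {σ : Equiv.Perm (Fin n) | ∃ f : Fin k ↪o Fin n,
      (∀ l : Fin k, σ (Fin.castLE hkn.le l) = f l) ∧
      (∀ a b : Fin n, k ≤ a.val → k ≤ b.val → a < b → σ a < σ b)} := by
  refine ⟨OrderEmbedding.ofStrictMono (fun l => σ (Fin.castLE hkn.le l)) ?_, fun l => rfl, h2⟩
  intro a b hab
  exact h1 _ _ a.isLt b.isLt hab

lemma rot_mem (i : ℕ) (hik : i < k) :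
    rot i k hik.le hkn ∈ {σ : Equiv.Perm (Fin n) | ∃ f : Fin k ↪o Fin n,
      (∀ l : Fin k, σ (Fin.castLE hkn.le l) = f l) ∧
      (∀ a b : Fin n, k ≤ a.val → k ≤ b.val → a < b → σ a < σ b)} := by
  refine mem_of_mono k hkn _ ?_ ?_ <;>
    · intro a b ha hb hab
      rw [Fin.lt_def] at *
      rw [rot_val, rot_val]
      split_ifs <;> omega

lemma rot_inv_mem (hk : 0 < k) (m : ℕ) (hkm : k ≤ m) (hm : m < n) :
    (rot (k - 1) m (by omega) hm)⁻¹ ∈ {σ : Equiv.Perm (Fin n) | ∃ f : Fin k ↪o Fin n,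
      (∀ l : Fin k, σ (Fin.castLE hkn.le l) = f l) ∧
      (∀ a b : Fin n, k ≤ a.val → k ≤ b.val → a < b → σ a < σ b)} := by
  refine mem_of_mono k hkn _ ?_ ?_ <;>
    · intro a b ha hb hab
      rw [Fin.lt_def] at *
      rw [rot_inv_val, rot_inv_val]
      split_ifs <;> omega

end

lemma swap_eq_low (k j : ℕ) (hj : j + 1 ≤ k) (hkn : k < n) :
    Equiv.swap (⟨j, by omega⟩ : Fin n) ⟨j + 1, by omega⟩ =
      rot j k (by omega) hkn * (rot (j + 1) k hj hkn)⁻¹ := by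
  ext x
  rw [Equiv.Perm.mul_apply, rot_val, rot_inv_val, Equiv.swap_apply_def,
    apply_ite Fin.val, apply_ite Fin.val]
  simp only [Fin.ext_iff]
  split_ifs <;> omega

lemma swap_eq_high (k j : ℕ) (hk : 0 < k) (hj : k - 1 ≤ j) (hj2 : j + 1 < n) :
    Equiv.swap (⟨j, by omega⟩ : Fin n) ⟨j + 1, by omega⟩ =
      (rot (k - 1) (j + 1) (by omega) hj2)⁻¹ * rot (k - 1) j (by omega) (by omega) := by
  ext x
  rw [Equiv.Perm.mul_apply, rot_inv_val, rot_val, Equiv.swap_apply_def,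
    apply_ite Fin.val, apply_ite Fin.val]
  simp only [Fin.ext_iff]
  split_ifs <;> omega

end IncSeqGen

set_option maxHeartbeats 1000000 in
/-- The permutations of `Fin n` obtained by completing strictly increasing sequences of
length `k` (with `0 < k < n`): such a permutation agrees with a strictly increasing sequence
on the first `k` indices and is strictly monotone (hence order-preservingly onto the
complement) on the remaining indices.  These generate the full symmetric group. -/
theorem increasing_sequences_generate_symmetric_group (n k : ℕ) (hk : 0 < k) (hkn : k < n) :
    Subgroup.closure {σ : Equiv.Perm (Fin n) | ∃ f : Fin k ↪o Fin n,
      (∀ l : Fin k, σ (Fin.castLE hkn.le l) = f l) ∧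
      (∀ a b : Fin n, k ≤ a.val → k ≤ b.val → a < b → σ a < σ b)} = ⊤ := by
  obtain ⟨m, rfl⟩ : ∃ m, n = m + 1 := ⟨n - 1, by omega⟩
  set S := {σ : Equiv.Perm (Fin (m + 1)) | ∃ f : Fin k ↪o Fin (m + 1),
      (∀ l : Fin k, σ (Fin.castLE hkn.le l) = f l) ∧
      (∀ a b : Fin (m + 1), k ≤ a.val → k ≤ b.val → a < b → σ a < σ b)} with hS
  rw [eq_top_iff]
  intro σ _
  have hle : Submonoid.closure (Set.range fun i : Fin m ↦ Equiv.swap i.castSucc i.succ) ≤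
      (Subgroup.closure S).toSubmonoid := by
    rw [Submonoid.closure_le]
    rintro _ ⟨i, rfl⟩
    show Equiv.swap i.castSucc i.succ ∈ Subgroup.closure S
    have hcast : i.castSucc = (⟨i.val, by omega⟩ : Fin (m + 1)) := Fin.ext (by simp)
    have hsucc : i.succ = (⟨i.val + 1, by omega⟩ : Fin (m + 1)) := Fin.ext (by simp)
    rw [hcast, hsucc]
    by_cases hcase : i.val + 1 ≤ k
    · rw [IncSeqGen.swap_eq_low k i.val hcase hkn]
      exact mul_mem (Subgroup.subset_closure (IncSeqGen.rot_mem k hkn i.val (by omega)))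
        (inv_mem (by
          rcases eq_or_lt_of_le hcase with h | h
          · have : IncSeqGen.rot (i.val + 1) k hcase hkn = 1 := by
              ext x
              rw [IncSeqGen.rot_val]
              simp only [Equiv.Perm.one_apply]
              split_ifs <;> omega
            rw [this]; exact one_mem _
          · exact Subgroup.subset_closure (IncSeqGen.rot_mem k hkn (i.val + 1) h)))
    · rw [IncSeqGen.swap_eq_high k i.val hk (by omega) (by omega)]
      refine mul_mem (Subgroup.subset_closure
        (IncSeqGen.rot_inv_mem k hkn hk (i.val + 1) (by omega) (by omega))) ?_
      rcases le_or_gt k i.val with h | h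
      · have h2 : (IncSeqGen.rot (k - 1) i.val (by omega) (by omega))⁻¹ ∈ S :=
          IncSeqGen.rot_inv_mem k hkn hk i.val h (by omega)
        simpa using inv_mem (Subgroup.subset_closure h2)
      · have : IncSeqGen.rot (k - 1) i.val (by omega) (by omega)
            = (1 : Equiv.Perm (Fin (m + 1))) := by
          ext x
          rw [IncSeqGen.rot_val]
          simp only [Equiv.Perm.one_apply]
          split_ifs <;> omega
        rw [this]; exact one_mem _
  exact hle (by rw [Equiv.Perm.mclosure_swap_castSucc_succ]; trivial)
end

section
/- An element F of SO(3) satisfies F D F^⊤ = D as a set, where D = {I, diag(-1,1,-1), diag(1,-1,-1), diag(-1,-1,1)}, if and only if F is a signed permutation matrix, i.e., F has exactly one nonzero entry (equal to ±1) in each row and each column. -/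
open Matrix

/-- `+1` at position `k` and `-1` elsewhere. -/
private def aD (k : Fin 3) : Fin 3 → ℝ := fun j => if j = k then 1 else -1

/-- The diagonal Klein four-group inside `SO(3)`. -/
noncomputable def diagKlein : Set (Matrix (Fin 3) (Fin 3) ℝ) :=
  {1, diagonal ![-1, 1, -1], diagonal ![1, -1, -1], diagonal ![-1, -1, 1]}

private lemma mem_diagKlein_iff (B : Matrix (Fin 3) (Fin 3) ℝ) :
    B ∈ diagKlein ↔ B = 1 ∨ ∃ m : Fin 3, B = diagonal (aD m) := by
  have aD1 : (![-1, 1, -1] : Fin 3 → ℝ) = aD 1 := by funext j; fin_cases j <;> simp [aD]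
  have aD0 : (![1, -1, -1] : Fin 3 → ℝ) = aD 0 := by funext j; fin_cases j <;> simp [aD]
  have aD2 : (![-1, -1, 1] : Fin 3 → ℝ) = aD 2 := by funext j; fin_cases j <;> simp [aD]
  rw [diagKlein, aD1, aD0, aD2]
  simp only [Set.mem_insert_iff, Set.mem_singleton_iff]
  constructor
  · rintro (h | h | h | h)
    · exact Or.inl h
    · exact Or.inr ⟨1, h⟩
    · exact Or.inr ⟨0, h⟩
    · exact Or.inr ⟨2, h⟩
  · rintro (h | ⟨m, h⟩)
    · exact Or.inl h
    · fin_cases m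
      · exact Or.inr (Or.inr (Or.inl h))
      · exact Or.inr (Or.inl h)
      · exact Or.inr (Or.inr (Or.inr h))

private lemma diag_aD_ne_one (k : Fin 3) : diagonal (aD k) ≠ 1 := by
  intro h
  obtain ⟨j, hj⟩ : ∃ j : Fin 3, j ≠ k := by
    fin_cases k
    exacts [⟨1, by decide⟩, ⟨0, by decide⟩, ⟨0, by decide⟩]
  have := congrFun (congrFun h j) j
  simp [aD, diagonal, Matrix.one_apply, hj] at this
  linarith

/-- An element `F` of `SO(3)` conjugates the diagonal Klein four-group `D` onto itself
(`F D Fᵀ = D` as a set) if and only if `F` is a signed permutation matrix: every entry is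
`0` or `±1` and each row and each column has exactly one nonzero entry. -/
theorem so3_normalizes_diagKlein_iff_signed_perm (F : Matrix (Fin 3) (Fin 3) ℝ)
    (hF : F ∈ Matrix.specialOrthogonalGroup (Fin 3) ℝ) :
    (fun A => F * A * Fᵀ) '' diagKlein = diagKlein ↔
      (∀ i j, F i j = 0 ∨ F i j = 1 ∨ F i j = -1) ∧
      (∀ i, ∃! j, F i j ≠ 0) ∧ (∀ j, ∃! i, F i j ≠ 0) := by
  rw [Matrix.mem_specialOrthogonalGroup_iff] at hF
  have hO : F * Fᵀ = 1 := by
    have := (Matrix.mem_orthogonalGroup_iff (Fin 3) ℝ).mp hF.1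
    simpa [star] using this
  have hO' : Fᵀ * F = 1 := by
    have := (Matrix.mem_orthogonalGroup_iff' (Fin 3) ℝ).mp hF.1
    simpa [star] using this
  have hrowsum : ∀ i, ∑ j, F i j * F i j = 1 := by
    intro i
    have := congrFun (congrFun hO i) i
    simpa [Matrix.mul_apply, Matrix.one_apply, transpose_apply] using this
  have hcolsum : ∀ j, ∑ i, F i j * F i j = 1 := by
    intro j
    have := congrFun (congrFun hO' j) j
    simpa [Matrix.mul_apply, Matrix.one_apply, transpose_apply] using this
  have hrowne : ∀ i, ∃ j, F i j ≠ 0 := by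
    intro i
    by_contra h
    push_neg at h
    have := hrowsum i
    simp [h] at this
  constructor
  · -- forward direction
    intro himg
    have key : ∀ k : Fin 3, ∃ m : Fin 3,
        ∀ i j, F i j ≠ 0 → (j = k ↔ i = m) := by
      intro k
      have hmem : F * diagonal (aD k) * Fᵀ ∈ diagKlein := by
        rw [← himg]
        exact ⟨diagonal (aD k), (mem_diagKlein_iff _).mpr (Or.inr ⟨k, rfl⟩), rfl⟩
      rcases (mem_diagKlein_iff _).mp hmem with h1 | ⟨m, hm⟩
      · exfalso
        apply diag_aD_ne_one k
        calc diagonal (aD k) = Fᵀ * (F * diagonal (aD k) * Fᵀ) * F := by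
              rw [← Matrix.mul_assoc, ← Matrix.mul_assoc, hO', Matrix.one_mul,
                Matrix.mul_assoc, hO', Matrix.mul_one]
          _ = 1 := by rw [h1]; rw [Matrix.mul_one, hO']
      · have hcomm : F * diagonal (aD k) = diagonal (aD m) * F := by
          calc F * diagonal (aD k) = F * diagonal (aD k) * Fᵀ * F := by
                rw [Matrix.mul_assoc, hO', Matrix.mul_one]
            _ = diagonal (aD m) * F := by rw [hm]
        refine ⟨m, fun i j hij => ?_⟩
        have hentry : F i j * aD k j = aD m i * F i j := by
          have := congrFun (congrFun hcomm i) j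
          simpa [Matrix.mul_diagonal, Matrix.diagonal_mul] using this
        have heq : aD k j = aD m i :=
          mul_left_cancel₀ hij (by rw [hentry, mul_comm])
        unfold aD at heq
        constructor
        · intro hj; by_contra hi
          rw [if_pos hj, if_neg hi] at heq; linarith
        · intro hi; by_contra hj
          rw [if_neg hj, if_pos hi] at heq; linarith
    choose σ hσ using key
    have hσinj : Function.Injective σ := by
      intro k k' h
      obtain ⟨j, hj⟩ := hrowne (σ k)
      have h1 : j = k := (hσ k (σ k) j hj).mpr rfl
      have hj' : F (σ k') j ≠ 0 := h ▸ hj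
      have h2 : j = k' := (hσ k' (σ k') j hj').mpr rfl
      exact h1.symm.trans h2
    have hzero : ∀ i j, F i j ≠ 0 → i = σ j := by
      intro i j hij
      exact (hσ j i j hij).mp rfl
    have hpm : ∀ j, F (σ j) j = 1 ∨ F (σ j) j = -1 := by
      intro j
      have hsum : F (σ j) j * F (σ j) j = 1 := by
        rw [← hcolsum j]
        symm
        apply Finset.sum_eq_single (σ j)
        · intro i _ hi
          have : F i j = 0 := by
            by_contra h
            exact hi (hzero i j h)
          simp [this]
        · simp
      exact mul_self_eq_one_iff.mp hsum
    refine ⟨?_, ?_, ?_⟩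
    · intro i j
      by_cases h : i = σ j
      · subst h
        rcases hpm j with h | h
        · exact Or.inr (Or.inl h)
        · exact Or.inr (Or.inr h)
      · left
        by_contra hne
        exact h (hzero i j hne)
    · intro i
      have hsurj : Function.Surjective σ := Finite.surjective_of_injective hσinj
      obtain ⟨j, hj⟩ := hsurj i
      refine ⟨j, ?_, ?_⟩
      · rw [← hj]
        rcases hpm j with h | h <;> rw [h] <;> norm_num
      · intro j' hj'
        have := hzero i j' hj'
        exact hσinj (by rw [← this, ← hj])
    · intro j
      refine ⟨σ j, ?_, ?_⟩
      · rcases hpm j with h | h <;> rw [h] <;> norm_num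
      · intro i hi
        exact hzero i j hi
  · -- reverse direction
    rintro ⟨h0, hrow, hcol⟩
    choose τ hτ hτu using hrow
    have hτinj : Function.Injective τ := by
      intro i i' h
      exact ExistsUnique.unique (hcol (τ i)) (hτ i) (by rw [h]; exact hτ i')
    have hsurjτ : Function.Surjective τ := Finite.surjective_of_injective hτinj
    have hvan : ∀ i j, j ≠ τ i → F i j = 0 := by
      intro i j h
      by_contra hne
      exact h (hτu i j hne)
    have hsq : ∀ i, F i (τ i) * F i (τ i) = 1 := by
      intro i
      rcases h0 i (τ i) with h | h | h
      · exact absurd h (hτ i)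
      · rw [h]; norm_num
      · rw [h]; norm_num
    have entry : ∀ (d : Fin 3 → ℝ) i i',
        (F * diagonal d * Fᵀ) i i' = ∑ j, F i j * d j * F i' j := by
      intro d i i'
      rw [Matrix.mul_apply]
      apply Finset.sum_congr rfl
      intro j _
      rw [Matrix.mul_diagonal, transpose_apply]
    have hconj : ∀ d : Fin 3 → ℝ, F * diagonal d * Fᵀ = diagonal (fun i => d (τ i)) := by
      intro d
      ext i i'
      rw [entry]
      by_cases h : i = i'
      · subst h
        rw [Matrix.diagonal_apply_eq]
        rw [Finset.sum_eq_single (τ i)]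
        · rw [show F i (τ i) * d (τ i) * F i (τ i)
              = (F i (τ i) * F i (τ i)) * d (τ i) from by ring, hsq i, one_mul]
        · intro j _ hj
          simp [hvan i j hj]
        · simp
      · rw [Matrix.diagonal_apply_ne _ h]
        apply Finset.sum_eq_zero
        intro j _
        by_cases hj : j = τ i
        · have : F i' j = 0 := by
            apply hvan i' j
            rw [hj]
            exact fun hc => h (hτinj hc)
          simp [this]
        · simp [hvan i j hj]
    have conj' : ∀ m, F * diagonal (aD (τ m)) * Fᵀ = diagonal (aD m) := by
      intro m
      rw [hconj]
      have : (fun i => aD (τ m) (τ i)) = aD m := by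
        funext i
        simp only [aD]
        by_cases h : i = m
        · subst h; simp
        · rw [if_neg (fun hc => h (hτinj hc)), if_neg h]
      rw [this]
    ext B
    constructor
    · rintro ⟨A, hA, rfl⟩
      rcases (mem_diagKlein_iff A).mp hA with h | ⟨k, h⟩
      · subst h
        show F * 1 * Fᵀ ∈ diagKlein
        rw [Matrix.mul_one, hO]
        exact (mem_diagKlein_iff 1).mpr (Or.inl rfl)
      · subst h
        obtain ⟨m, hm⟩ := hsurjτ k
        show F * diagonal (aD k) * Fᵀ ∈ diagKlein
        rw [← hm, conj']
        exact (mem_diagKlein_iff _).mpr (Or.inr ⟨m, rfl⟩)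
    · intro hB
      rcases (mem_diagKlein_iff B).mp hB with h | ⟨m, h⟩
      · subst h
        exact ⟨1, (mem_diagKlein_iff 1).mpr (Or.inl rfl), by simp [hO]⟩
      · subst h
        exact ⟨diagonal (aD (τ m)), (mem_diagKlein_iff _).mpr (Or.inr ⟨τ m, rfl⟩), conj' m⟩
end

section
/- Every subgroup of SO(3) isomorphic to O(2) is of the form { F · blockdiag(A, det A) · F^⊤ : A ∈ O(2) } for some F ∈ SO(3), where blockdiag(A, det A) denotes the 3×3 matrix with A in the upper-left 2×2 block and det(A) in the lower-right corner. -/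
/-!
Let `z ∈ H` correspond to `-1 ∈ O(2)`. It is a central element `≠ 1` of `H ⊆ SO(3)`, so its fixed
space is a line `ℝv`, and every element of `H`, commuting with `z`, maps `v` to `±v`. Hence `H` lies
in the stabiliser of the line `ℝv`, which is the conjugate `F · blockdiag(O(2)) · Fᵀ` of the
standard copy by any `F ∈ SO(3)` with `F e₃ = v`. Equality holds because a continuous injective
endomorphism of `O(2)` is surjective: on the circle `SO(2)` its image pulls back to a closed
subgroup of `ℝ` which cannot be cyclic, since `SO(2)` is uncountable; and some reflection must be
hit as well.
-/

open Matrix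

/-- The standard block embedding `O(2) → SO(3)`, `A ↦ blockdiag(A, det A)`. -/
noncomputable def blockEmbed (A : Matrix (Fin 2) (Fin 2) ℝ) : Matrix (Fin 3) (Fin 3) ℝ :=
  Matrix.reindex (finSumFinEquiv (m := 2) (n := 1)) (finSumFinEquiv (m := 2) (n := 1))
    (Matrix.fromBlocks A 0 0 (Matrix.of fun _ _ => A.det))

open Real Function Set

local notation "O₂" => Matrix.orthogonalGroup (Fin 2) ℝ
local notation "O₃" => Matrix.orthogonalGroup (Fin 3) ℝ
local notation "SO₃" => Matrix.specialOrthogonalGroup (Fin 3) ℝ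
local notation "e₃" => (Pi.single 2 1 : Fin 3 → ℝ)

lemma det_eq_one_or_neg_one_of_orthogonal {n : Type*} [Fintype n] [DecidableEq n]
    (A : Matrix.orthogonalGroup n ℝ) :
    (A : Matrix n n ℝ).det = 1 ∨ (A : Matrix n n ℝ).det = -1 :=
  Unitary.mem_iff_eq_one_or_eq_neg_one.1 (det_of_mem_unitary A.2)

lemma blockEmbed_eq (A : Matrix (Fin 2) (Fin 2) ℝ) :
    blockEmbed A = !![A 0 0, A 0 1, 0; A 1 0, A 1 1, 0; 0, 0, A.det] := by
  ext i j
  fin_cases i <;> fin_cases j <;> rfl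

lemma blockEmbed_mul (A B : Matrix (Fin 2) (Fin 2) ℝ) :
    blockEmbed (A * B) = blockEmbed A * blockEmbed B := by
  ext i j
  fin_cases i <;> fin_cases j <;>
    simp [blockEmbed_eq, mul_apply, Fin.sum_univ_three, det_fin_two]

lemma blockEmbed_one : blockEmbed 1 = 1 := by
  ext i j
  fin_cases i <;> fin_cases j <;> simp [blockEmbed_eq]

lemma blockEmbed_transpose (A : Matrix (Fin 2) (Fin 2) ℝ) :
    blockEmbed Aᵀ = (blockEmbed A)ᵀ := by
  ext i j
  fin_cases i <;> fin_cases j <;> simp [blockEmbed_eq]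

lemma blockEmbed_submatrix (A : Matrix (Fin 2) (Fin 2) ℝ) :
    (blockEmbed A).submatrix Fin.castSucc Fin.castSucc = A := by
  ext i j
  fin_cases i <;> fin_cases j <;> rfl

lemma exists_eq_blockEmbed {M : Matrix (Fin 3) (Fin 3) ℝ} (hM : M ∈ SO₃) {c : ℝ}
    (hc : M *ᵥ e₃ = c • e₃) : ∃ A ∈ O₂, M = blockEmbed A := by
  obtain ⟨hO, hdet⟩ := mem_specialOrthogonalGroup_iff.1 hM
  have h02 : M 0 2 = 0 := by simpa using congrFun hc 0
  have h12 : M 1 2 = 0 := by simpa using congrFun hc 1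
  have h22 : M 2 2 = c := by simpa using congrFun hc 2
  have hrows := congrFun₂ ((mem_orthogonalGroup_iff (Fin 3) ℝ).1 hO)
  have hcols := congrFun₂ ((mem_orthogonalGroup_iff' (Fin 3) ℝ).1 hO)
  simp only [mul_apply, transpose_apply, Fin.sum_univ_three, one_apply] at hrows hcols
  have hc2 : c * c = 1 := by simpa [h02, h12, h22] using hcols 2 2
  obtain ⟨h20, h21⟩ : M 2 0 = 0 ∧ M 2 1 = 0 :=
    mul_self_add_mul_self_eq_zero.1 (by simpa [h22, hc2] using hrows 2 2)
  rw [det_fin_three] at hdet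
  refine ⟨!![M 0 0, M 0 1; M 1 0, M 1 1], ?_, ?_⟩
  · rw [mem_orthogonalGroup_iff]
    ext i j
    have := hrows i.castSucc j.castSucc
    fin_cases i <;> fin_cases j <;> simpa [mul_apply, h02, h12] using this
  · ext i j
    fin_cases i <;> fin_cases j <;> simp [blockEmbed_eq, h02, h12, h20, h21, det_fin_two]
    grind

lemma triple_product_eq_det_of (u v w : Fin 3 → ℝ) : u ⬝ᵥ v ⨯₃ w = (of ![u, v, w]).det :=
  triple_product_eq_det u v w

namespace SO3

variable {M : Matrix (Fin 3) (Fin 3) ℝ}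

lemma mulVec_cross_mulVec (hM : M ∈ SO₃) (u w : Fin 3 → ℝ) :
    (M *ᵥ u) ⨯₃ (M *ᵥ w) = M *ᵥ (u ⨯₃ w) := by
  obtain ⟨hO, hdet⟩ := mem_specialOrthogonalGroup_iff.1 hM
  refine dotProduct_eq _ _ fun z => ?_
  obtain ⟨y, rfl⟩ : ∃ y, M *ᵥ y = z :=
    ⟨Mᵀ *ᵥ z, by rw [mulVec_mulVec, (mem_orthogonalGroup_iff _ _).1 hO, one_mulVec]⟩
  have hrows : of ![M *ᵥ y, M *ᵥ u, M *ᵥ w] = of ![y, u, w] * Mᵀ := by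
    ext i j
    fin_cases i <;> simp [mul_apply, mulVec, dotProduct, mul_comm]
  rw [dotProduct_comm, triple_product_eq_det_of, hrows, det_mul, det_transpose, hdet, mul_one,
    ← triple_product_eq_det_of, dotProduct_comm, dotProduct_mulVec, ← mulVec_transpose,
    mulVec_mulVec, (mem_orthogonalGroup_iff' _ _).1 hO, one_mulVec]

lemma eq_one_of_mulVec_eq_self (hM : M ∈ SO₃) {u w : Fin 3 → ℝ} (hu : M *ᵥ u = u)
    (hw : M *ᵥ w = w) (huw : u ⨯₃ w ≠ 0) : M = 1 := by
  set x := u ⨯₃ w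
  have hx : M *ᵥ x = x := by rw [← mulVec_cross_mulVec hM, hu, hw]
  set P := (of ![u, w, x])ᵀ with hPdef
  have hP : IsUnit P.det := by
    rw [hPdef, det_transpose, isUnit_iff_ne_zero, ← triple_product_eq_det_of,
      triple_product_permutation, triple_product_permutation]
    exact fun h => huw (dotProduct_self_eq_zero.1 h)
  have hMP : M * P = P := by
    ext i j
    fin_cases j
    exacts [congrFun hu i, congrFun hw i, congrFun hx i]
  calc M = M * P * P⁻¹ := (mul_nonsing_inv_cancel_right P M hP).symm
    _ = 1 := by rw [hMP, mul_nonsing_inv P hP]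

lemma exists_unit_mulVec_eq_self (hM : M ∈ SO₃) : ∃ v, v ⬝ᵥ v = 1 ∧ M *ᵥ v = v := by
  obtain ⟨hO, hdet⟩ := mem_specialOrthogonalGroup_iff.1 hM
  have hsub : M - 1 = M * (1 - M)ᵀ := by
    rw [transpose_sub, transpose_one, mul_sub, mul_one, (mem_orthogonalGroup_iff _ _).1 hO]
  have hdet0 : (M - 1).det = 0 := by
    have h : (M - 1).det = -(M - 1).det := by
      conv_lhs => rw [hsub, det_mul, hdet, one_mul, det_transpose, ← neg_sub, det_neg]
      norm_num
    linarith
  obtain ⟨v, hv0, hv⟩ := exists_mulVec_eq_zero_iff.2 hdet0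
  rw [sub_mulVec, one_mulVec, sub_eq_zero] at hv
  have hs : 0 < v ⬝ᵥ v := lt_of_le_of_ne (Finset.sum_nonneg fun i _ => mul_self_nonneg (v i))
    (Ne.symm (mt dotProduct_self_eq_zero.1 hv0))
  refine ⟨(√(v ⬝ᵥ v))⁻¹ • v, ?_, by rw [mulVec_smul, hv]⟩
  rw [smul_dotProduct, dotProduct_smul, smul_smul, smul_eq_mul, ← mul_inv, mul_self_sqrt hs.le,
    inv_mul_cancel₀ hs.ne']

lemma exists_axis (hM : M ∈ SO₃) (hM1 : M ≠ 1) :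
    ∃ v, v ⬝ᵥ v = 1 ∧ ∀ w, M *ᵥ w = w ↔ ∃ c : ℝ, w = c • v := by
  obtain ⟨v, hv1, hv⟩ := exists_unit_mulVec_eq_self hM
  have hv0 : v ≠ 0 := by rintro rfl; simp at hv1
  refine ⟨v, hv1, fun w => ⟨fun hw => ?_, ?_⟩⟩
  · have hdep : ¬ LinearIndependent ℝ ![v, w] := fun hind =>
      hM1 (eq_one_of_mulVec_eq_self hM hv hw (crossProduct_ne_zero_iff_linearIndependent.2 hind))
    simpa [LinearIndependent.pair_iff' hv0, eq_comm] using hdep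
  · rintro ⟨c, rfl⟩
    rw [mulVec_smul, hv]

end SO3

lemma exists_mem_SO3_mulVec_e₃ {v : Fin 3 → ℝ} (hv : v ⬝ᵥ v = 1) : ∃ F ∈ SO₃, F *ᵥ e₃ = v := by
  have hv' : v 0 ^ 2 + v 1 ^ 2 + v 2 ^ 2 = 1 := by
    simpa [dotProduct, Fin.sum_univ_three, sq] using hv
  by_cases hc : v 2 = -1
  · have h0 : v 0 = 0 := by nlinarith
    have h1 : v 1 = 0 := by nlinarith
    refine ⟨!![1, 0, 0; 0, -1, 0; 0, 0, -1], ?_, ?_⟩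
    · rw [mem_specialOrthogonalGroup_iff, mem_orthogonalGroup_iff]
      refine ⟨?_, by simp [det_fin_three]⟩
      ext i j
      fin_cases i <;> fin_cases j <;> simp [mul_apply, Fin.sum_univ_three]
    · ext i
      fin_cases i <;> simp [h0, h1, hc]
  -- the rotation about the axis `e₃ ⨯₃ v` taking `e₃` to `v`
  set k := (1 + v 2)⁻¹
  have hk : k * (1 + v 2) = 1 := inv_mul_cancel₀ fun h => hc (by linarith)
  refine ⟨!![1 - v 0 ^ 2 * k, -(v 0 * v 1 * k), v 0; -(v 0 * v 1 * k), 1 - v 1 ^ 2 * k, v 1;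
    -v 0, -v 1, v 2], ?_, ?_⟩
  · rw [mem_specialOrthogonalGroup_iff, mem_orthogonalGroup_iff]
    refine ⟨?_, ?_⟩
    · ext i j
      fin_cases i <;> fin_cases j <;> simp [mul_apply, Fin.sum_univ_three, one_apply] <;> grind
    · simp [det_fin_three]
      grind
  · ext i
    fin_cases i <;> simp

namespace O2

noncomputable def rot (θ : ℝ) : O₂ :=
  ⟨!![cos θ, -sin θ; sin θ, cos θ],
    (of_mem_specialOrthogonalGroup_fin_two_iff.2 ⟨rfl, rfl, by rw [neg_sq, cos_sq_add_sin_sq]⟩).1⟩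

lemma coe_rot (θ : ℝ) : (rot θ : Matrix (Fin 2) (Fin 2) ℝ) = !![cos θ, -sin θ; sin θ, cos θ] :=
  rfl

lemma rot_add (a b : ℝ) : rot (a + b) = rot a * rot b := by
  ext i j
  fin_cases i <;> fin_cases j <;> simp [coe_rot, mul_apply, cos_add, sin_add] <;> ring

lemma rot_zero : rot 0 = 1 := by
  ext i j
  fin_cases i <;> fin_cases j <;> simp [coe_rot]

lemma rot_neg (a : ℝ) : rot (-a) = (rot a)⁻¹ :=
  eq_inv_of_mul_eq_one_left (by rw [← rot_add, neg_add_cancel, rot_zero])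

lemma rot_periodic : Periodic rot (2 * π) := fun θ => by
  ext i j
  fin_cases i <;> fin_cases j <;> simp [coe_rot]

lemma continuous_rot : Continuous rot := by
  refine continuous_induced_rng.2 (continuous_matrix fun i j => ?_)
  fin_cases i <;> fin_cases j <;> simp [coe_rot] <;> fun_prop

lemma det_rot (θ : ℝ) : (rot θ : Matrix (Fin 2) (Fin 2) ℝ).det = 1 := by
  simp [coe_rot, det_fin_two, ← sq]

lemma exists_rot_eq {A : O₂} (hA : (A : Matrix (Fin 2) (Fin 2) ℝ).det = 1) :
    ∃ θ, rot θ = A := by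
  obtain ⟨h11, h01, hnorm⟩ := mem_specialOrthogonalGroup_fin_two_iff.1 ⟨A.2, hA⟩
  obtain ⟨θ, hθ⟩ := (Complex.norm_eq_one_iff ⟨A 0 0, A 1 0⟩).1 <| by
    rw [Complex.norm_def, Complex.normSq_mk, ← sq, ← sq, ← neg_sq (A 1 0), ← h01, hnorm, sqrt_one]
  have hcos : cos θ = A 0 0 := by rw [← Complex.exp_ofReal_mul_I_re, hθ]
  have hsin : sin θ = A 1 0 := by rw [← Complex.exp_ofReal_mul_I_im, hθ]
  refine ⟨θ, ?_⟩
  ext i j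
  fin_cases i <;> fin_cases j <;> simp [coe_rot, hcos, hsin, h11, h01]

lemma not_countable_range_rot : ¬ (range rot).Countable := fun h => by
  have hcos : range cos ⊆ (fun A : O₂ => (A : Matrix (Fin 2) (Fin 2) ℝ) 0 0) '' range rot := by
    rintro _ ⟨θ, rfl⟩
    exact ⟨rot θ, mem_range_self θ, by simp [coe_rot]⟩
  rw [range_cos] at hcos
  exact absurd ((h.image _).mono hcos) (by simp)

section Endomorphism

variable {f : O₂ →* O₂}

lemma det_map_rot (hf : Continuous f) (θ : ℝ) :
    (f (rot θ) : Matrix (Fin 2) (Fin 2) ℝ).det = 1 := by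
  set g : ℝ → ℝ := fun θ => (f (rot θ) : Matrix (Fin 2) (Fin 2) ℝ).det
  have hg : Continuous g := (continuous_subtype_val.comp (hf.comp continuous_rot)).matrix_det
  have hg0 : g 0 = 1 := by simp [g, rot_zero]
  refine (det_eq_one_or_neg_one_of_orthogonal _).resolve_right fun hθ => ?_
  have hgθ : g θ = -1 := hθ
  obtain ⟨x, hx⟩ := intermediate_value_univ θ 0 hg (show (0 : ℝ) ∈ Icc (g θ) (g 0) by
    rw [hgθ, hg0]; norm_num)
  rcases det_eq_one_or_neg_one_of_orthogonal (f (rot x)) with h | h <;> simp [g, h] at hx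

lemma exists_map_rot_eq (hf : Continuous f) (hinj : Injective f) (ψ : ℝ) :
    ∃ θ, f (rot θ) = rot ψ := by
  let K : AddSubgroup ℝ :=
    { carrier := rot ⁻¹' range (f ∘ rot)
      add_mem' := by
        rintro a b ⟨s, hs⟩ ⟨t, ht⟩
        exact ⟨s + t, by simp_all [rot_add]⟩
      zero_mem' := ⟨0, by simp [rot_zero]⟩
      neg_mem' := by
        rintro a ⟨s, hs⟩
        exact ⟨-s, by simp_all [rot_neg]⟩ }
  have hclosed : IsClosed (K : Set ℝ) :=
    ((rot_periodic.comp f).compact_of_continuous two_pi_pos.ne'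
      (hf.comp continuous_rot)).isClosed.preimage continuous_rot
  rcases K.dense_or_cyclic with hdense | ⟨a, ha⟩
  · have hψ : ψ ∈ (K : Set ℝ) := by rw [← hclosed.closure_eq, hdense.closure_eq]; trivial
    exact hψ
  · have hK : (K : Set ℝ).Countable := by
      rw [ha, ← AddSubgroup.zmultiples_eq_closure]
      exact (countable_range (· • a : ℤ → ℝ)).mono fun _ => AddSubgroup.mem_zmultiples_iff.1
    have hrange : range rot ⊆ f ⁻¹' (rot '' K) := by
      rintro _ ⟨θ, rfl⟩
      obtain ⟨ψ, hψ⟩ := exists_rot_eq (det_map_rot hf θ)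
      exact ⟨ψ, ⟨θ, hψ.symm⟩, hψ⟩
    exact absurd (((hK.image rot).preimage hinj).mono hrange) not_countable_range_rot

theorem surjective_of_injective (hf : Continuous f) (hinj : Injective f) : Surjective f := by
  have hSO2 : ∀ A : O₂, (A : Matrix (Fin 2) (Fin 2) ℝ).det = 1 → ∃ θ, f (rot θ) = A := by
    intro A hA
    obtain ⟨ψ, rfl⟩ := exists_rot_eq hA
    exact exists_map_rot_eq hf hinj ψ
  let ρ : O₂ := ⟨!![1, 0; 0, -1], by
    rw [mem_orthogonalGroup_iff]
    ext i j
    fin_cases i <;> fin_cases j <;> simp [vecMul, dotProduct]⟩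
  have hρ : (f ρ : Matrix (Fin 2) (Fin 2) ℝ).det = -1 := by
    refine (det_eq_one_or_neg_one_of_orthogonal _).resolve_left fun h => ?_
    obtain ⟨θ, hθ⟩ := hSO2 _ h
    have := det_rot θ
    rw [hinj hθ] at this
    norm_num [ρ, det_fin_two] at this
  intro A
  rcases det_eq_one_or_neg_one_of_orthogonal A with hA | hA
  · obtain ⟨θ, hθ⟩ := hSO2 A hA
    exact ⟨rot θ, hθ⟩
  · obtain ⟨θ, hθ⟩ := hSO2 (f ρ * A) (by simp [det_mul, hρ, hA])
    exact ⟨ρ⁻¹ * rot θ, by rw [map_mul, map_inv, hθ, inv_mul_cancel_left]⟩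

end Endomorphism

theorem eq_of_le_of_mulEquiv {G : Type*} [Group G] [TopologicalSpace G] {H K : Subgroup G}
    (hHK : H ≤ K) (e : H ≃* O₂) (he : Continuous e.symm) (f : K ≃* O₂) (hf : Continuous f) :
    H = K := by
  let g : O₂ →* O₂ := f.toMonoidHom.comp ((Subgroup.inclusion hHK).comp e.symm.toMonoidHom)
  have hg : Continuous g := hf.comp ((continuous_subtype_val.comp he).subtype_mk _)
  have hginj : Injective g :=
    f.injective.comp ((Subgroup.inclusion_injective hHK).comp e.symm.injective)
  refine le_antisymm hHK fun x hx => ?_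
  obtain ⟨A, hA⟩ := surjective_of_injective hg hginj (f ⟨x, hx⟩)
  have hxA : ((e.symm A : H) : G) = x := congrArg Subtype.val (f.injective hA)
  exact hxA ▸ (e.symm A).2

end O2

noncomputable def blockEmbedHom : O₂ →* O₃ :=
  MonoidHom.mk' (fun A : O₂ => ⟨blockEmbed A, (mem_orthogonalGroup_iff _ _).2 <| by
      rw [← blockEmbed_transpose, ← blockEmbed_mul, (mem_orthogonalGroup_iff _ _).1 A.2,
        blockEmbed_one]⟩)
    fun A B => Subtype.ext (blockEmbed_mul A B)

noncomputable def conjBlockEmbed (F : O₃) : O₂ →* O₃ :=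
  (MulAut.conj F).toMonoidHom.comp blockEmbedHom

section conjBlockEmbed

variable (F : O₃)

lemma coe_conjBlockEmbed (A : O₂) :
    (conjBlockEmbed F A : Matrix (Fin 3) (Fin 3) ℝ) =
      (F : Matrix (Fin 3) (Fin 3) ℝ) * blockEmbed A * (F : Matrix (Fin 3) (Fin 3) ℝ)ᵀ :=
  rfl

lemma submatrix_conjBlockEmbed (A : O₂) :
    ((F : Matrix (Fin 3) (Fin 3) ℝ)ᵀ * conjBlockEmbed F A * F).submatrix Fin.castSucc Fin.castSucc
      = A := by
  have hFF : (F : Matrix (Fin 3) (Fin 3) ℝ)ᵀ * F = 1 := (mem_orthogonalGroup_iff' _ _).1 F.2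
  rw [coe_conjBlockEmbed, ← mul_assoc, ← mul_assoc, hFF, one_mul, mul_assoc, hFF, mul_one,
    blockEmbed_submatrix]

lemma conjBlockEmbed_injective : Injective (conjBlockEmbed F) := fun A B h =>
  Subtype.ext <| by rw [← submatrix_conjBlockEmbed F A, h, submatrix_conjBlockEmbed]

lemma continuous_ofInjective_conjBlockEmbed_symm :
    Continuous (MonoidHom.ofInjective (conjBlockEmbed_injective F)).symm := by
  refine continuous_induced_rng.2 ?_
  have h : ∀ x, ((MonoidHom.ofInjective (conjBlockEmbed_injective F)).symm x : O₂) =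
      ((F : Matrix (Fin 3) (Fin 3) ℝ)ᵀ * (x : O₃) * F).submatrix Fin.castSucc Fin.castSucc :=
    fun x => by
      rw [← MonoidHom.apply_ofInjective_symm (conjBlockEmbed_injective F) x,
        submatrix_conjBlockEmbed]
  have hval :
      Continuous fun x : (conjBlockEmbed F).range => ((x : O₃) : Matrix (Fin 3) (Fin 3) ℝ) :=
    continuous_subtype_val.comp continuous_subtype_val
  simp only [Function.comp_def, h]
  exact ((continuous_const.matrix_mul hval).matrix_mul continuous_const).matrix_submatrix _ _

lemma image_coe_range_conjBlockEmbed :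
    (fun X : O₃ => (X : Matrix (Fin 3) (Fin 3) ℝ)) '' ((conjBlockEmbed F).range : Set O₃) =
      {M | ∃ A ∈ O₂, M = F * blockEmbed A * (F : Matrix (Fin 3) (Fin 3) ℝ)ᵀ} := by
  ext M
  constructor
  · rintro ⟨_, ⟨A, rfl⟩, rfl⟩
    exact ⟨A, A.2, coe_conjBlockEmbed F A⟩
  · rintro ⟨A, hA, rfl⟩
    exact ⟨_, ⟨⟨A, hA⟩, rfl⟩, coe_conjBlockEmbed F ⟨A, hA⟩⟩

variable {F}

lemma mem_range_conjBlockEmbed {M : O₃} (hM : (M : Matrix (Fin 3) (Fin 3) ℝ).det = 1) {c : ℝ}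
    (hMv : (M : Matrix (Fin 3) (Fin 3) ℝ) *ᵥ ((F : Matrix (Fin 3) (Fin 3) ℝ) *ᵥ e₃) =
      c • ((F : Matrix (Fin 3) (Fin 3) ℝ) *ᵥ e₃)) :
    M ∈ (conjBlockEmbed F).range := by
  obtain ⟨F, hF⟩ := F
  obtain ⟨M, hMO⟩ := M
  have hFF : Fᵀ * F = 1 := (mem_orthogonalGroup_iff' _ _).1 hF
  have hFF' : F * Fᵀ = 1 := (mem_orthogonalGroup_iff _ _).1 hF
  have hFT : Fᵀ ∈ O₃ := (mem_orthogonalGroup_iff _ _).2 (by rw [transpose_transpose, hFF])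
  have hN : Fᵀ * M * F ∈ SO₃ := by
    refine mem_specialOrthogonalGroup_iff.2 ⟨mul_mem (mul_mem hFT hMO) hF, ?_⟩
    rw [det_mul, det_mul, mul_right_comm, ← det_mul, hFF, det_one, one_mul]
    exact hM
  obtain ⟨A, hA, hNA⟩ := exists_eq_blockEmbed hN (c := c) <| by
    rw [← mulVec_mulVec, ← mulVec_mulVec, hMv, mulVec_smul, mulVec_mulVec, hFF, one_mulVec]
  refine ⟨⟨A, hA⟩, Subtype.ext ?_⟩
  rw [coe_conjBlockEmbed, ← hNA, ← mul_assoc, ← mul_assoc, hFF', one_mul, mul_assoc, hFF',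
    mul_one]

end conjBlockEmbed

lemma exists_le_range_conjBlockEmbed {H : Subgroup O₃}
    (hdet : ∀ M ∈ H, (M : Matrix (Fin 3) (Fin 3) ℝ).det = 1) {z : O₃} (hzH : z ∈ H) (hz1 : z ≠ 1)
    (hz : ∀ M ∈ H, z * M = M * z) :
    ∃ F : O₃, (F : Matrix (Fin 3) (Fin 3) ℝ).det = 1 ∧ H ≤ (conjBlockEmbed F).range := by
  have hz1' : (z : Matrix (Fin 3) (Fin 3) ℝ) ≠ 1 := fun h => hz1 (Subtype.ext h)
  obtain ⟨v, hv1, hfix⟩ :=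
    SO3.exists_axis (mem_specialOrthogonalGroup_iff.2 ⟨z.2, hdet z hzH⟩) hz1'
  obtain ⟨F, hF, hFv⟩ := exists_mem_SO3_mulVec_e₃ hv1
  obtain ⟨hFO, hFdet⟩ := mem_specialOrthogonalGroup_iff.1 hF
  refine ⟨⟨F, hFO⟩, hFdet, fun M hM => ?_⟩
  have hzv : (z : Matrix (Fin 3) (Fin 3) ℝ) *ᵥ v = v := (hfix v).2 ⟨1, (one_smul _ _).symm⟩
  obtain ⟨c, hc⟩ := (hfix _).1 <| show (z : Matrix (Fin 3) (Fin 3) ℝ) *ᵥ (M *ᵥ v) = M *ᵥ v by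
    rw [mulVec_mulVec, ← Submonoid.coe_mul, hz M hM, Submonoid.coe_mul, ← mulVec_mulVec, hzv]
  rw [← hFv] at hc
  exact mem_range_conjBlockEmbed (hdet M hM) hc

theorem O2_subgroups_of_SO3_general (H : Subgroup (Matrix.orthogonalGroup (Fin 3) ℝ))
    (hdet : ∀ F ∈ H, (F : Matrix (Fin 3) (Fin 3) ℝ).det = 1)
    (e : H ≃* Matrix.orthogonalGroup (Fin 2) ℝ)
    (he' : Continuous e.symm) :
    ∃ F : Matrix (Fin 3) (Fin 3) ℝ, F ∈ Matrix.specialOrthogonalGroup (Fin 3) ℝ ∧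
      ((fun X : Matrix.orthogonalGroup (Fin 3) ℝ => (X : Matrix (Fin 3) (Fin 3) ℝ)) ''
          (H : Set (Matrix.orthogonalGroup (Fin 3) ℝ))) =
        {M | ∃ A ∈ Matrix.orthogonalGroup (Fin 2) ℝ, M = F * blockEmbed A * Fᵀ} := by
  set z : H := e.symm (-1)
  have hz : ∀ M ∈ H, (z : O₃) * M = M * z := fun M hM => by
    have hzM : z * ⟨M, hM⟩ = ⟨M, hM⟩ * z := e.injective <| by
      rw [map_mul, map_mul, e.apply_symm_apply, neg_one_mul, mul_neg_one]
    exact congrArg Subtype.val hzM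
  have hz1 : (z : O₃) ≠ 1 := fun h => by
    have h1 : e z = 1 := by rw [show z = 1 from Subtype.ext h, map_one]
    have h2 := congrArg (fun x : O₂ => (x : Matrix (Fin 2) (Fin 2) ℝ) 0 0) h1
    norm_num [z, Unitary.coe_neg] at h2
  obtain ⟨F, hF, hle⟩ := exists_le_range_conjBlockEmbed hdet z.2 hz1 hz
  refine ⟨F, mem_specialOrthogonalGroup_iff.2 ⟨F.2, hF⟩, ?_⟩
  rw [O2.eq_of_le_of_mulEquiv hle e he' _ (continuous_ofInjective_conjBlockEmbed_symm F)]
  exact image_coe_range_conjBlockEmbed F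

/-- Every subgroup of `SO(3)` isomorphic, as a topological group, to `O(2)` is of the form
`{F · blockdiag(A, det A) · Fᵀ : A ∈ O(2)}` for some `F ∈ SO(3)`. -/
theorem O2_subgroups_of_SO3 (H : Subgroup (Matrix.orthogonalGroup (Fin 3) ℝ))
    (hdet : ∀ F ∈ H, (F : Matrix (Fin 3) (Fin 3) ℝ).det = 1)
    (e : H ≃* Matrix.orthogonalGroup (Fin 2) ℝ)
    (he : Continuous e) (he' : Continuous e.symm) :
    ∃ F : Matrix (Fin 3) (Fin 3) ℝ, F ∈ Matrix.specialOrthogonalGroup (Fin 3) ℝ ∧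
      ((fun X : Matrix.orthogonalGroup (Fin 3) ℝ => (X : Matrix (Fin 3) (Fin 3) ℝ)) ''
          (H : Set (Matrix.orthogonalGroup (Fin 3) ℝ))) =
        {M | ∃ A ∈ Matrix.orthogonalGroup (Fin 2) ℝ, M = F * blockEmbed A * Fᵀ} :=
  O2_subgroups_of_SO3_general H hdet e he'
end

section
/- If σ: H ⊗ H → k is a 2-cocycle on a Hopf algebra H (convolution invertible, satisfying σ(x₁,y₁)σ(x₂y₂,z) = σ(y₁,z₁)σ(x,y₂z₂) and σ(x,1)=ε(x)=σ(1,x)), then the twisted multiplication [x][y] = σ(x₁,y₁) σ⁻¹(x₃,y₃) [x₂y₂] on the underlying coalgebra of H is associative. -/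
open scoped TensorProduct

noncomputable section

variable (k : Type*) [CommRing k] (H : Type*) [Ring H] [HopfAlgebra k H]

/-- The comultiplication of the tensor product coalgebra `H ⊗ H`:
`Δ₂(x ⊗ y) = (x₁ ⊗ y₁) ⊗ (x₂ ⊗ y₂)` in Sweedler notation. -/
def comul2 : H ⊗[k] H →ₗ[k] (H ⊗[k] H) ⊗[k] (H ⊗[k] H) :=
  (TensorProduct.tensorTensorTensorComm k H H H H).toLinearMap ∘ₗ
    TensorProduct.map Coalgebra.comul Coalgebra.comul

/-- The counit of the tensor product coalgebra `H ⊗ H`: `ε₂(x ⊗ y) = ε(x)ε(y)`. -/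
def counit2 : H ⊗[k] H →ₗ[k] k :=
  LinearMap.mul' k k ∘ₗ TensorProduct.map Coalgebra.counit Coalgebra.counit

/-- Convolution product of two linear functionals on the coalgebra `H ⊗ H`. -/
def conv2 (f g : H ⊗[k] H →ₗ[k] k) : H ⊗[k] H →ₗ[k] k :=
  LinearMap.mul' k k ∘ₗ TensorProduct.map f g ∘ₗ comul2 k H

/-- The comultiplication of the tensor product coalgebra `(H ⊗ H) ⊗ H`. -/
def comul3 : (H ⊗[k] H) ⊗[k] H →ₗ[k] ((H ⊗[k] H) ⊗[k] H) ⊗[k] ((H ⊗[k] H) ⊗[k] H) :=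
  (TensorProduct.tensorTensorTensorComm k (H ⊗[k] H) (H ⊗[k] H) H H).toLinearMap ∘ₗ
    TensorProduct.map (comul2 k H) Coalgebra.comul

/-- Convolution product of two linear functionals on the coalgebra `(H ⊗ H) ⊗ H`. -/
def conv3 (f g : (H ⊗[k] H) ⊗[k] H →ₗ[k] k) : (H ⊗[k] H) ⊗[k] H →ₗ[k] k :=
  LinearMap.mul' k k ∘ₗ TensorProduct.map f g ∘ₗ comul3 k H

variable {k H} in
/-- The cocycle-twisted multiplication on `H`:
`[x][y] = σ(x₁, y₁) σ⁻¹(x₃, y₃) [x₂ y₂]` in Sweedler notation. -/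
def twistedMul (σ σinv : H ⊗[k] H →ₗ[k] k) : H ⊗[k] H →ₗ[k] H :=
  (TensorProduct.lid k H).toLinearMap ∘ₗ
    TensorProduct.map σ
      ((TensorProduct.rid k H).toLinearMap ∘ₗ
        TensorProduct.map (LinearMap.mul' k H) σinv) ∘ₗ
    TensorProduct.map LinearMap.id (comul2 k H) ∘ₗ
    comul2 k H

end

/-! In the convolution algebra of linear maps `H ⊗ H → H`, the twisted product is the conjugate
`σ * m * σ⁻¹` of the multiplication `m` by the convolution unit `σ` (scalars embedded by
`algebraMap k H`). Precomposing with a coalgebra map, tensoring with `id`, or postcomposing with a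
linear map all turn such a conjugate into another one, so both bracketings of a triple twisted
product are conjugates of `m ∘ (m ⊗ id)`: by `(σ ⊗ ε) * σ ∘ (m ⊗ id)` and by
`((ε ⊗ σ) * σ ∘ (id ⊗ m)) ∘ assoc` respectively. The cocycle identity says exactly that these two
units agree. For the unit laws, normalization makes the conjugating unit trivial along the
coalgebra maps `x ↦ x ⊗ 1` and `x ↦ 1 ⊗ x`. -/

open TensorProduct WithConv Coalgebra

namespace AlgHom
variable {R A B C : Type*} [CommSemiring R] [Semiring A] [Algebra R A] [Semiring B] [Algebra R B]
  [AddCommMonoid C] [Module R C] [Coalgebra R C]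

noncomputable def postcompConv (φ : A →ₐ[R] B) :
    WithConv (C →ₗ[R] A) →+* WithConv (C →ₗ[R] B) where
  toFun f := toConv (φ.toLinearMap ∘ₗ f.ofConv)
  map_one' := by ext; simp
  map_mul' f g := ofConv_injective (LinearMap.algHom_comp_convMul_distrib φ f g)
  map_zero' := by ext; simp
  map_add' f g := by ext; simp

@[simp] lemma ofConv_postcompConv (φ : A →ₐ[R] B) (f : WithConv (C →ₗ[R] A)) :
    (φ.postcompConv f).ofConv = φ.toLinearMap ∘ₗ f.ofConv := rfl

end AlgHom

namespace CoalgHom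
variable {R A B C : Type*} [CommSemiring R] [Semiring A] [Algebra R A]
  [AddCommMonoid B] [Module R B] [Coalgebra R B] [AddCommMonoid C] [Module R C] [Coalgebra R C]

noncomputable def precompConv (h : B →ₗc[R] C) :
    WithConv (C →ₗ[R] A) →+* WithConv (B →ₗ[R] A) where
  toFun f := toConv (f.ofConv ∘ₗ h.toLinearMap)
  map_one' := by ext; simp
  map_mul' f g := ofConv_injective (LinearMap.convMul_comp_coalgHom_distrib f g h)
  map_zero' := by ext; simp
  map_add' f g := by ext; simp

@[simp] lemma ofConv_precompConv (h : B →ₗc[R] C) (f : WithConv (C →ₗ[R] A)) :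
    (h.precompConv f).ofConv = f.ofConv ∘ₗ h.toLinearMap := rfl

end CoalgHom

namespace Coalgebra.TensorProduct
variable (R C D : Type*) [CommSemiring R] [AddCommMonoid C] [Module R C] [Coalgebra R C]
  [AddCommMonoid D] [Module R D] [Coalgebra R D]

noncomputable def fstCoalgHom : C ⊗[R] D →ₗc[R] C :=
  (Coalgebra.TensorProduct.rid R R C).toCoalgHom.comp
    (map (CoalgHom.id R C) (counitCoalgHom R D))

noncomputable def sndCoalgHom : C ⊗[R] D →ₗc[R] D :=
  (Coalgebra.TensorProduct.lid R D).toCoalgHom.comp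
    (map (counitCoalgHom R C) (CoalgHom.id R D))

variable {R C D}

@[simp] lemma fstCoalgHom_tmul (c : C) (d : D) :
    fstCoalgHom R C D (c ⊗ₜ d) = counit (R := R) d • c := rfl

@[simp] lemma sndCoalgHom_tmul (c : C) (d : D) :
    sndCoalgHom R C D (c ⊗ₜ d) = counit (R := R) c • d := rfl

end Coalgebra.TensorProduct

namespace Bialgebra.TensorProduct
variable (R A B : Type*) [CommSemiring R] [AddCommMonoid A] [Module R A] [Coalgebra R A]
  [Semiring B] [Bialgebra R B]

noncomputable def includeLeftCoalgHom : A →ₗc[R] A ⊗[R] B :=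
  (Coalgebra.TensorProduct.map (CoalgHom.id R A) (unitBialgHom R B).toCoalgHom).comp
    (Coalgebra.TensorProduct.rid R R A).symm.toCoalgHom

noncomputable def includeRightCoalgHom : A →ₗc[R] B ⊗[R] A :=
  (Coalgebra.TensorProduct.map (unitBialgHom R B).toCoalgHom (CoalgHom.id R A)).comp
    (Coalgebra.TensorProduct.lid R A).symm.toCoalgHom

@[simp] lemma toLinearMap_includeLeftCoalgHom :
    (includeLeftCoalgHom R A B).toLinearMap = (TensorProduct.mk R A B).flip 1 := by
  ext; simp [includeLeftCoalgHom, BialgHom.toCoalgHom_apply]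

@[simp] lemma toLinearMap_includeRightCoalgHom :
    (includeRightCoalgHom R A B).toLinearMap = TensorProduct.mk R B A 1 := by
  ext; simp [includeRightCoalgHom, BialgHom.toCoalgHom_apply]

end Bialgebra.TensorProduct

namespace LinearMap

section Scalars
variable {R A B C D : Type*} [CommSemiring R] [Semiring A] [Algebra R A] [Semiring B]
  [Algebra R B] [AddCommMonoid C] [Module R C] [Coalgebra R C]

lemma mul'_comp_map_counit [AddCommMonoid D] [Module R D] [Coalgebra R D] (f : C →ₗ[R] R) :
    mul' R R ∘ₗ map f counit = f ∘ₗ (TensorProduct.fstCoalgHom R C D).toLinearMap := by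
  ext c d
  simp [mul_comm]

lemma mul'_comp_counit_map [AddCommMonoid D] [Module R D] [Coalgebra R D] (f : D →ₗ[R] R) :
    mul' R R ∘ₗ map counit f = f ∘ₗ (TensorProduct.sndCoalgHom R C D).toLinearMap := by
  ext c d
  simp

lemma ofConv_algebraMap_convMul (p : WithConv (C →ₗ[R] R)) (Y : WithConv (C →ₗ[R] A)) :
    ((Algebra.ofId R A).postcompConv p * Y).ofConv =
      (TensorProduct.lid R A).toLinearMap ∘ₗ map p.ofConv Y.ofConv ∘ₗ comul := by
  ext c
  simp [(ℛ R c).convMul_apply, ← (ℛ R c).eq, Algebra.smul_def]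

lemma ofConv_convMul_algebraMap (Y : WithConv (C →ₗ[R] A)) (q : WithConv (C →ₗ[R] R)) :
    (Y * (Algebra.ofId R A).postcompConv q).ofConv =
      (TensorProduct.rid R A).toLinearMap ∘ₗ map Y.ofConv q.ofConv ∘ₗ comul := by
  ext c
  simp [(ℛ R c).convMul_apply, ← (ℛ R c).eq, Algebra.smul_def, Algebra.commutes]

lemma comp_algebraMap_convMul (φ : A →ₗ[R] B) (p : WithConv (C →ₗ[R] R))
    (Y : WithConv (C →ₗ[R] A)) :
    toConv (φ ∘ₗ ((Algebra.ofId R A).postcompConv p * Y).ofConv) =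
      (Algebra.ofId R B).postcompConv p * toConv (φ ∘ₗ Y.ofConv) := by
  ext c
  simp [(ℛ R c).convMul_apply, ← Algebra.smul_def]

lemma comp_convMul_algebraMap (φ : A →ₗ[R] B) (Y : WithConv (C →ₗ[R] A))
    (q : WithConv (C →ₗ[R] R)) :
    toConv (φ ∘ₗ (Y * (Algebra.ofId R A).postcompConv q).ofConv) =
      toConv (φ ∘ₗ Y.ofConv) * (Algebra.ofId R B).postcompConv q := by
  ext c
  simp [(ℛ R c).convMul_apply, ← Algebra.commutes, ← Algebra.smul_def]

lemma toConv_map_algebraMap_one [Semiring D] [Bialgebra R D] (p : WithConv (C →ₗ[R] R)) :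
    toConv (map ((Algebra.ofId R A).postcompConv p).ofConv (1 : WithConv (D →ₗ[R] D)).ofConv) =
      (Algebra.ofId R (A ⊗[R] D)).postcompConv
        ((TensorProduct.fstCoalgHom R C D).precompConv p) := by
  ext c d
  simp [Algebra.algebraMap_eq_smul_one, ← TensorProduct.smul_tmul', smul_smul,
    Algebra.TensorProduct.one_def, mul_comm]

lemma toConv_map_one_algebraMap [Semiring D] [Bialgebra R D] (p : WithConv (C →ₗ[R] R)) :
    toConv (map (1 : WithConv (D →ₗ[R] D)).ofConv ((Algebra.ofId R A).postcompConv p).ofConv) =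
      (Algebra.ofId R (D ⊗[R] A)).postcompConv
        ((TensorProduct.sndCoalgHom R D C).precompConv p) := by
  ext d c
  simp [Algebra.algebraMap_eq_smul_one, ← TensorProduct.smul_tmul', smul_smul,
    Algebra.TensorProduct.one_def, mul_comm]

end Scalars

section Conjugation
variable {R A B C D : Type*} [CommSemiring R] [Semiring A] [Algebra R A] [Semiring B]
  [Algebra R B] [AddCommMonoid C] [Module R C] [Coalgebra R C]

noncomputable def convConj (u : (WithConv (C →ₗ[R] R))ˣ) (X : C →ₗ[R] A) : C →ₗ[R] A :=
  ((Algebra.ofId R A).postcompConv ↑u * toConv X * (Algebra.ofId R A).postcompConv ↑u⁻¹).ofConv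

@[simp] lemma convConj_one (X : C →ₗ[R] A) : convConj 1 X = X := by
  simp [convConj]

lemma convConj_mul (u v : (WithConv (C →ₗ[R] R))ˣ) (X : C →ₗ[R] A) :
    convConj (u * v) X = convConj u (convConj v X) := by
  simp [convConj, mul_assoc]

lemma comp_convConj (φ : A →ₗ[R] B) (u : (WithConv (C →ₗ[R] R))ˣ) (X : C →ₗ[R] A) :
    φ ∘ₗ convConj u X = convConj u (φ ∘ₗ X) := by
  rw [convConj, ← ofConv_toConv (φ ∘ₗ _), comp_convMul_algebraMap, comp_algebraMap_convMul]
  rfl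

variable [AddCommMonoid D] [Module R D] [Coalgebra R D]

lemma convConj_comp (u : (WithConv (C →ₗ[R] R))ˣ) (X : C →ₗ[R] A) (h : D →ₗc[R] C) :
    convConj u X ∘ₗ h.toLinearMap =
      convConj (Units.map h.precompConv.toMonoidHom u) (X ∘ₗ h.toLinearMap) := by
  change (h.precompConv (_ * _ * _)).ofConv = _
  rw [map_mul, map_mul]
  rfl

lemma convConj_comp_of_comp_eq_counit (u : (WithConv (C →ₗ[R] R))ˣ) (X : C →ₗ[R] A)
    (h : D →ₗc[R] C) (hu : (u : WithConv (C →ₗ[R] R)).ofConv ∘ₗ h.toLinearMap = counit) :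
    convConj u X ∘ₗ h.toLinearMap = X ∘ₗ h.toLinearMap := by
  have : Units.map h.precompConv.toMonoidHom u = 1 := Units.ext (congrArg toConv hu)
  rw [convConj_comp, this, convConj_one]

end Conjugation

section TensorConjugation
variable {R A C D : Type*} [CommSemiring R] [Semiring A] [Algebra R A]
  [AddCommMonoid C] [Module R C] [Coalgebra R C] [Semiring D] [Bialgebra R D]

lemma map_convConj_id (u : (WithConv (C →ₗ[R] R))ˣ) (X : C →ₗ[R] A) :
    map (convConj u X) (id : D →ₗ[R] D) =
      convConj (Units.map (TensorProduct.fstCoalgHom R C D).precompConv.toMonoidHom u)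
        (map X id) := by
  have hid : (id : D →ₗ[R] D) = (1 * toConv id * 1 : WithConv (D →ₗ[R] D)).ofConv := by simp
  apply toConv_injective
  conv_lhs => rw [hid]
  rw [convConj, convConj, toConv_ofConv]
  simp only [← TensorProduct.map_convMul_map, toConv_map_algebraMap_one]
  rfl

lemma map_id_convConj (u : (WithConv (C →ₗ[R] R))ˣ) (X : C →ₗ[R] A) :
    map (id : D →ₗ[R] D) (convConj u X) =
      convConj (Units.map (TensorProduct.sndCoalgHom R D C).precompConv.toMonoidHom u)
        (map id X) := by
  have hid : (id : D →ₗ[R] D) = (1 * toConv id * 1 : WithConv (D →ₗ[R] D)).ofConv := by simp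
  apply toConv_injective
  conv_lhs => rw [hid]
  rw [convConj, convConj, toConv_ofConv]
  simp only [← TensorProduct.map_convMul_map, toConv_map_one_algebraMap]
  rfl

end TensorConjugation

end LinearMap

section Twisting
variable {k : Type*} [CommRing k] {H : Type*} [Ring H] [HopfAlgebra k H]
open LinearMap Bialgebra Coalgebra.TensorProduct Bialgebra.TensorProduct

lemma comul2_eq_comul : comul2 k H = comul := rfl

lemma toConv_counit2 : toConv (counit2 k H) = 1 := by
  ext x y
  simp [counit2, mul_comm]

lemma conv3_eq_convMul (f g : (H ⊗[k] H) ⊗[k] H →ₗ[k] k) :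
    conv3 k H f g = (toConv f * toConv g).ofConv := rfl

lemma twistedMul_eq_convConj (u : (WithConv (H ⊗[k] H →ₗ[k] k))ˣ) :
    twistedMul (u : WithConv _).ofConv (↑u⁻¹ : WithConv _).ofConv = convConj u (mul' k H) := by
  rw [convConj, mul_assoc, ofConv_algebraMap_convMul, ofConv_toConv, ofConv_convMul_algebraMap,
    twistedMul, comul2_eq_comul, ← lTensor_def, ← comp_assoc _ (lTensor _ _), map_comp_lTensor]
  rfl

lemma twistedMul_comp_map_twistedMul_id (u : (WithConv (H ⊗[k] H →ₗ[k] k))ˣ) :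
    twistedMul (u : WithConv _).ofConv (↑u⁻¹ : WithConv _).ofConv ∘ₗ
        map (twistedMul (u : WithConv _).ofConv (↑u⁻¹ : WithConv _).ofConv) LinearMap.id =
      convConj (Units.map (fstCoalgHom k (H ⊗[k] H) H).precompConv.toMonoidHom u *
          Units.map (map (mulCoalgHom k H) (CoalgHom.id k H)).precompConv.toMonoidHom u)
        (mul' k H ∘ₗ map (mul' k H) LinearMap.id) := by
  rw [twistedMul_eq_convConj, map_convConj_id, comp_convConj, convConj_mul]
  exact congrArg _ (convConj_comp u (mul' k H) (map (mulCoalgHom k H) (CoalgHom.id k H)))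

lemma twistedMul_comp_map_id_twistedMul (u : (WithConv (H ⊗[k] H →ₗ[k] k))ˣ) :
    twistedMul (u : WithConv _).ofConv (↑u⁻¹ : WithConv _).ofConv ∘ₗ
        map LinearMap.id (twistedMul (u : WithConv _).ofConv (↑u⁻¹ : WithConv _).ofConv) ∘ₗ
          (TensorProduct.assoc k H H H).toLinearMap =
      convConj (Units.map (Coalgebra.TensorProduct.assoc k k H H H).toCoalgHom.precompConv.toMonoidHom
          (Units.map (sndCoalgHom k H (H ⊗[k] H)).precompConv.toMonoidHom u *
            Units.map (map (CoalgHom.id k H) (mulCoalgHom k H)).precompConv.toMonoidHom u))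
        (mul' k H ∘ₗ map (mul' k H) LinearMap.id) := by
  have h_mul_assoc : (mul' k H ∘ₗ map LinearMap.id (mul' k H)) ∘ₗ
      (TensorProduct.assoc k H H H).toLinearMap = mul' k H ∘ₗ map (mul' k H) LinearMap.id := by
    ext
    simp [mul_assoc]
  have h_id_mul : map LinearMap.id (mul' k H) =
      (map (CoalgHom.id k H) (mulCoalgHom k H)).toLinearMap := rfl
  have h_assoc : (TensorProduct.assoc k H H H).toLinearMap =
      (Coalgebra.TensorProduct.assoc k k H H H).toCoalgHom.toLinearMap := rfl
  rw [twistedMul_eq_convConj, map_id_convConj, ← comp_assoc, comp_convConj, h_id_mul,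
    convConj_comp, ← convConj_mul, h_assoc, convConj_comp, ← h_assoc, ← h_id_mul, h_mul_assoc]

lemma units_eq_of_cocycle (u : (WithConv (H ⊗[k] H →ₗ[k] k))ˣ)
    (hcocycle :
      conv3 k H (mul' k k ∘ₗ map (u : WithConv _).ofConv counit)
        ((u : WithConv _).ofConv ∘ₗ map (mul' k H) LinearMap.id) =
      conv3 k H ((mul' k k ∘ₗ map counit (u : WithConv _).ofConv) ∘ₗ
          (TensorProduct.assoc k H H H).toLinearMap)
        (((u : WithConv _).ofConv ∘ₗ map LinearMap.id (mul' k H)) ∘ₗ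
          (TensorProduct.assoc k H H H).toLinearMap)) :
    Units.map (fstCoalgHom k (H ⊗[k] H) H).precompConv.toMonoidHom u *
        Units.map (map (mulCoalgHom k H) (CoalgHom.id k H)).precompConv.toMonoidHom u =
      Units.map (Coalgebra.TensorProduct.assoc k k H H H).toCoalgHom.precompConv.toMonoidHom
        (Units.map (sndCoalgHom k H (H ⊗[k] H)).precompConv.toMonoidHom u *
          Units.map (map (CoalgHom.id k H) (mulCoalgHom k H)).precompConv.toMonoidHom u) := by
  rw [conv3_eq_convMul, conv3_eq_convMul, mul'_comp_map_counit, mul'_comp_counit_map] at hcocycle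
  refine Units.ext (ofConv_injective ?_)
  simp only [Units.val_mul, Units.coe_map, map_mul]
  exact hcocycle

lemma twistedMul_comp_mk_flip_one (u : (WithConv (H ⊗[k] H →ₗ[k] k))ˣ)
    (hu : (u : WithConv _).ofConv ∘ₗ (TensorProduct.mk k H H).flip 1 = counit) :
    twistedMul (u : WithConv _).ofConv (↑u⁻¹ : WithConv _).ofConv ∘ₗ
      (TensorProduct.mk k H H).flip 1 = LinearMap.id := by
  rw [twistedMul_eq_convConj, ← toLinearMap_includeLeftCoalgHom, convConj_comp_of_comp_eq_counit]
  all_goals rw [toLinearMap_includeLeftCoalgHom]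
  · ext
    simp
  · exact hu

lemma twistedMul_comp_mk_one (u : (WithConv (H ⊗[k] H →ₗ[k] k))ˣ)
    (hu : (u : WithConv _).ofConv ∘ₗ TensorProduct.mk k H H 1 = counit) :
    twistedMul (u : WithConv _).ofConv (↑u⁻¹ : WithConv _).ofConv ∘ₗ
      TensorProduct.mk k H H 1 = LinearMap.id := by
  rw [twistedMul_eq_convConj, ← toLinearMap_includeRightCoalgHom, convConj_comp_of_comp_eq_counit]
  all_goals rw [toLinearMap_includeRightCoalgHom]
  · ext
    simp
  · exact hu

end Twisting

variable (k : Type*) [CommRing k] (H : Type*) [Ring H] [HopfAlgebra k H]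

/-- Let `H` be a Hopf algebra over `k` and `σ : H ⊗ H → k` a 2-cocycle: convolution
invertible (with convolution inverse `σinv`), satisfying the cocycle identity
`σ(x₁,y₁)σ(x₂y₂,z) = σ(y₁,z₁)σ(x,y₂z₂)` and normalized so that `σ(x,1) = ε(x) = σ(1,x)`.
Then the twisted multiplication `[x][y] = σ(x₁,y₁) σ⁻¹(x₃,y₃) [x₂y₂]` on the underlying
coalgebra of `H` is associative, with unit `[1]`. -/
theorem twistedMul_associative (σ σinv : H ⊗[k] H →ₗ[k] k)
    (hinv₁ : conv2 k H σ σinv = counit2 k H)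
    (hinv₂ : conv2 k H σinv σ = counit2 k H)
    (hcocycle :
      conv3 k H (LinearMap.mul' k k ∘ₗ TensorProduct.map σ Coalgebra.counit)
        (σ ∘ₗ TensorProduct.map (LinearMap.mul' k H) LinearMap.id) =
      conv3 k H
        ((LinearMap.mul' k k ∘ₗ TensorProduct.map Coalgebra.counit σ) ∘ₗ
          (TensorProduct.assoc k H H H).toLinearMap)
        ((σ ∘ₗ TensorProduct.map LinearMap.id (LinearMap.mul' k H)) ∘ₗ
          (TensorProduct.assoc k H H H).toLinearMap))
    (hone₁ : σ ∘ₗ (TensorProduct.mk k H H).flip 1 = Coalgebra.counit)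
    (hone₂ : σ ∘ₗ TensorProduct.mk k H H 1 = Coalgebra.counit) :
    twistedMul σ σinv ∘ₗ TensorProduct.map (twistedMul σ σinv) LinearMap.id =
      twistedMul σ σinv ∘ₗ TensorProduct.map LinearMap.id (twistedMul σ σinv) ∘ₗ
        (TensorProduct.assoc k H H H).toLinearMap ∧
    twistedMul σ σinv ∘ₗ (TensorProduct.mk k H H).flip 1 = LinearMap.id ∧
    twistedMul σ σinv ∘ₗ TensorProduct.mk k H H 1 = LinearMap.id := by
  obtain ⟨u, rfl, rfl⟩ : ∃ u : (WithConv (H ⊗[k] H →ₗ[k] k))ˣ,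
      (u : WithConv _).ofConv = σ ∧ (↑u⁻¹ : WithConv _).ofConv = σinv :=
    ⟨⟨toConv σ, toConv σinv, by rw [← toConv_counit2, ← hinv₁]; rfl,
      by rw [← toConv_counit2, ← hinv₂]; rfl⟩, rfl, rfl⟩
  refine ⟨?_, twistedMul_comp_mk_flip_one u hone₁, twistedMul_comp_mk_one u hone₂⟩
  rw [twistedMul_comp_map_twistedMul_id, twistedMul_comp_map_id_twistedMul, units_eq_of_cocycle u hcocycle]
end
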